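/- Let q ≥ 1, λ ≥ 1/2 with 2λq ∈ ℕ, and let f : ℝ^d → [0,1]. Let s ∈ ℝ^d be random with each coordinate sᵢ marginally uniform on the finite set {k/q + 1/(2q) : 0 ≤ k ≤ 2λq - 1}, with arbitrary joint distribution. Define x̃ᵢ = (min(sᵢ,1) + 1_{xᵢ > sᵢ})/2 and p(x) = E_s[f(x̃)]. Then for all x, x' in the quantized cube {0, 1/q, ..., 1}^d, |p(x) - p(x')| ≤ ‖x - x'‖₁/(2λ). -/

import Mathlib

/-!
Moving from `x` to `x'` changes the rounding `x̃` only for noise `s` with some `sᵢ` in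
`[min xᵢ x'ᵢ, max xᵢ x'ᵢ)`, and there `|f x̃ - f x̃'| ≤ 1`. A union bound over the coordinates
bounds `|p x - p x'|` by the sum of the marginal probabilities of these intervals; for grid points
`a/q` and `b/q` the interval holds `|a - b|` of the `m = 2λq` half-steps, so its probability is
`|xᵢ - x'ᵢ| / (2λ)`. Since every marginal lives on a finite set, so does `μ`, which makes every
bounded function integrable even though `f` is not assumed measurable.
-/

open MeasureTheory Set

/-- Discrete uniform probability measure on `{k/q + 1/(2q) : 0 ≤ k ≤ m-1}`. -/
noncomputable def discUnif (q m : ℕ) : Measure ℝ :=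
  (m : ENNReal)⁻¹ • ∑ k ∈ Finset.range m, Measure.dirac ((k : ℝ) / q + 1 / (2 * q))

namespace Set

variable {α : Type*} [LinearOrder α]

def uIco (a b : α) : Set α := Ico (min a b) (max a b)

lemma uIco_comm (a b : α) : uIco a b = uIco b a := by
  rw [uIco, uIco, min_comm, max_comm]

end Set

lemma measurableSet_uIco {α : Type*} [LinearOrder α] [TopologicalSpace α] [MeasurableSpace α]
    [OpensMeasurableSpace α] [ClosedIciTopology α] (a b : α) : MeasurableSet (uIco a b) :=
  measurableSet_Ico

open scoped Classical in
lemma discUnif_apply (q m : ℕ) {A : Set ℝ} (hA : MeasurableSet A) :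
    discUnif q m A =
      ((Finset.range m).filter fun k : ℕ => (k : ℝ) / q + 1 / (2 * q) ∈ A).card / m := by
  simp only [discUnif, Measure.smul_apply, Measure.coe_finsetSum, Finset.sum_apply,
    Measure.dirac_apply' _ hA, smul_eq_mul, ENNReal.div_eq_inv_mul]
  simp [Set.indicator_apply, Finset.sum_boole]

lemma ae_discUnif_mem (q m : ℕ) :
    ∀ᵐ t ∂discUnif q m, t ∈ (Finset.range m).image fun k : ℕ => (k : ℝ) / q + 1 / (2 * q) := by
  refine (mem_ae_iff (s := (((Finset.range m).image _ : Finset ℝ) : Set ℝ))).2 ?_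
  rw [discUnif_apply _ _ (Finset.measurableSet _).compl]
  simpa using fun k hk => ⟨k, hk, rfl⟩

lemma halfStep_mem_Ico_iff {q : ℕ} (hq : 0 < q) {a b k : ℕ} :
    (k : ℝ) / q + 1 / (2 * q) ∈ Ico ((a : ℝ) / q) (b / q) ↔ a ≤ k ∧ k < b := by
  have hq' : (0 : ℝ) < q := by exact_mod_cast hq
  rw [show (k : ℝ) / q + 1 / (2 * q) = (k + 1 / 2) / q by field_simp, mem_Ico,
    div_le_div_iff_of_pos_right hq', div_lt_div_iff_of_pos_right hq']
  constructor
  · rintro ⟨h₁, h₂⟩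
    have h₁' : (a : ℝ) < k + 1 := by linarith
    have h₂' : (k : ℝ) < b := by linarith
    exact ⟨Nat.lt_succ_iff.1 (by exact_mod_cast h₁'), by exact_mod_cast h₂'⟩
  · rintro ⟨h₁, h₂⟩
    have h₁' : (a : ℝ) ≤ k := by exact_mod_cast h₁
    have h₂' : (k : ℝ) + 1 ≤ b := by exact_mod_cast h₂
    constructor <;> linarith

lemma discUnif_Ico {q m : ℕ} (hq : 0 < q) {a b : ℕ} (hbm : b ≤ m) :
    discUnif q m (Ico ((a : ℝ) / q) (b / q)) = ((b - a : ℕ) : ENNReal) / m := by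
  rw [discUnif_apply _ _ measurableSet_Ico, ← Nat.card_Ico]
  congr 3
  ext k
  simp only [Finset.mem_filter, Finset.mem_range, Finset.mem_Ico, halfStep_mem_Ico_iff hq]
  omega

lemma discUnif_real_uIco {q m : ℕ} (hq : 0 < q) {a b : ℕ} (ham : a ≤ m) (hbm : b ≤ m) :
    (discUnif q m).real (uIco ((a : ℝ) / q) (b / q)) = |(a : ℝ) - b| / m := by
  wlog hab : a ≤ b generalizing a b
  · rw [uIco_comm, abs_sub_comm]
    exact this hbm ham (by omega)
  have hdiv : (a : ℝ) / q ≤ b / q := by gcongr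
  rw [uIco, min_eq_left hdiv, max_eq_right hdiv, measureReal_def, discUnif_Ico hq hbm,
    ENNReal.toReal_div, ENNReal.toReal_natCast, ENNReal.toReal_natCast, Nat.cast_sub hab,
    abs_sub_comm, abs_of_nonneg (sub_nonneg.2 (by exact_mod_cast hab))]

lemma aestronglyMeasurable_of_ae_mem_countable {α β : Type*} [MeasurableSpace α]
    [MeasurableSingletonClass α] [TopologicalSpace β] {μ : Measure α} {S : Set α}
    (hS : S.Countable) (hμ : ∀ᵐ x ∂μ, x ∈ S) (f : α → β) : AEStronglyMeasurable f μ := by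
  have : Countable S := hS.to_subtype
  rw [← Measure.restrict_eq_self_of_ae_mem hμ, ← map_comap_subtype_coe hS.measurableSet,
    (MeasurableEmbedding.subtype_coe hS.measurableSet).aestronglyMeasurable_map_iff]
  exact .of_discrete

lemma ae_mem_pi_of_map_eq_discUnif {ι : Type*} [Countable ι] {q m : ℕ} {μ : Measure (ι → ℝ)}
    (hmarg : ∀ i, μ.map (fun s => s i) = discUnif q m) :
    ∀ᵐ s ∂μ, s ∈ univ.pi fun _ =>
      ((Finset.range m).image fun k : ℕ => (k : ℝ) / q + 1 / (2 * q) : Set ℝ) := by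
  simp only [mem_univ_pi]
  exact ae_all_iff.2 fun i =>
    ae_of_ae_map (measurable_pi_apply i).aemeasurable (hmarg i ▸ ae_discUnif_mem q m)

lemma integrable_of_map_eq_discUnif {ι : Type*} [Finite ι] {q m : ℕ} {μ : Measure (ι → ℝ)}
    [IsFiniteMeasure μ] (hmarg : ∀ i, μ.map (fun s => s i) = discUnif q m)
    {g : (ι → ℝ) → ℝ} {C : ℝ} (hg : ∀ s, |g s| ≤ C) : Integrable g μ :=
  .of_bound (aestronglyMeasurable_of_ae_mem_countable
    (Finite.pi fun _ => Finset.finite_toSet _).countable (ae_mem_pi_of_map_eq_discUnif hmarg) g)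
    C (.of_forall hg)

/-- The rounding `x̃` of the paper. -/
noncomputable def ssnRound {ι : Type*} (x s : ι → ℝ) : ι → ℝ :=
  fun i => (min (s i) 1 + if s i < x i then 1 else 0) / 2

lemma lt_iff_lt_of_notMem_uIco {α : Type*} [LinearOrder α] {t u v : α} (h : t ∉ uIco u v) :
    t < u ↔ t < v := by
  simp only [uIco, mem_Ico, min_le_iff, lt_max_iff, not_and_or, not_or, not_le, not_lt] at h
  constructor <;> intro <;> grind

lemma abs_sub_comp_ssnRound_le_sum_indicator {ι : Type*} [Fintype ι] {g : (ι → ℝ) → ℝ}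
    (hg : ∀ y, g y ∈ Icc (0 : ℝ) 1) (x x' s : ι → ℝ) :
    |g (ssnRound x s) - g (ssnRound x' s)| ≤
      ∑ i, ((fun s => s i) ⁻¹' uIco (x i) (x' i)).indicator 1 s := by
  by_cases h : ∃ i, s i ∈ uIco (x i) (x' i)
  · obtain ⟨i, hi⟩ := h
    calc |g (ssnRound x s) - g (ssnRound x' s)| ≤ 1 :=
          abs_sub_le_of_nonneg_of_le (hg _).1 (hg _).2 (hg _).1 (hg _).2
      _ = ((fun s => s i) ⁻¹' uIco (x i) (x' i)).indicator 1 s :=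
          (indicator_of_mem (mem_preimage.2 hi) 1).symm
      _ ≤ _ := Finset.single_le_sum (f := fun j =>
            ((fun s => s j) ⁻¹' uIco (x j) (x' j)).indicator 1 s)
          (fun j _ => indicator_nonneg (fun _ _ => zero_le_one) _) (Finset.mem_univ i)
  · push Not at h
    have hround : ssnRound x s = ssnRound x' s := by
      ext i
      simp only [ssnRound, lt_iff_lt_of_notMem_uIco (h i)]
    rw [hround, sub_self, abs_zero]
    exact Finset.sum_nonneg fun j _ => indicator_nonneg (fun _ _ => zero_le_one) _

lemma abs_integral_comp_ssnRound_sub_le {ι : Type*} [Fintype ι] {μ : Measure (ι → ℝ)}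
    [IsFiniteMeasure μ] {g : (ι → ℝ) → ℝ} (hg : ∀ y, g y ∈ Icc (0 : ℝ) 1) {x x' : ι → ℝ}
    (hint : Integrable (fun s => g (ssnRound x s)) μ)
    (hint' : Integrable (fun s => g (ssnRound x' s)) μ) :
    |∫ s, g (ssnRound x s) ∂μ - ∫ s, g (ssnRound x' s) ∂μ| ≤
      ∑ i, μ.real ((fun s => s i) ⁻¹' uIco (x i) (x' i)) := by
  have hmeas : ∀ i, MeasurableSet
      ((fun s : ι → ℝ => s i) ⁻¹' uIco (x i) (x' i)) :=
    fun i => measurable_pi_apply i (measurableSet_uIco _ _)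
  calc |∫ s, g (ssnRound x s) ∂μ - ∫ s, g (ssnRound x' s) ∂μ|
      = |∫ s, (g (ssnRound x s) - g (ssnRound x' s)) ∂μ| := by rw [integral_sub hint hint']
    _ ≤ ∫ s, |g (ssnRound x s) - g (ssnRound x' s)| ∂μ := abs_integral_le_integral_abs
    _ ≤ ∫ s, ∑ i, ((fun s => s i) ⁻¹' uIco (x i) (x' i)).indicator 1 s ∂μ :=
        integral_mono (hint.sub hint').abs
          (integrable_finsetSum _ fun i _ => (integrable_const 1).indicator (hmeas i))
          (abs_sub_comp_ssnRound_le_sum_indicator hg x x')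
    _ = _ := by
        rw [integral_finsetSum _ fun i _ => (integrable_const 1).indicator (hmeas i)]
        exact Finset.sum_congr rfl fun i _ => integral_indicator_one (hmeas i)

/-- Quantized SSN: smoothing with splitting noise whose coordinates are marginally uniform
on the half-steps (arbitrary joint distribution) is `1/(2λ)`-Lipschitz w.r.t. the ℓ1 norm
on the quantized cube `{0, 1/q, ..., 1}^d`. -/
theorem quantized_ssn_lipschitz (d q : ℕ) (hq : 1 ≤ q) (lam : ℝ) (hlam : 1/2 ≤ lam)
    (m : ℕ) (hm : (m : ℝ) = 2 * lam * q)
    (f : (Fin d → ℝ) → ℝ) (hf : ∀ y, f y ∈ Icc (0:ℝ) 1)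
    (μ : Measure (Fin d → ℝ)) [IsProbabilityMeasure μ]
    (hmarg : ∀ i, μ.map (fun s => s i) = discUnif q m)
    (p : (Fin d → ℝ) → ℝ)
    (hp : ∀ x, p x = ∫ s, f (fun i => (min (s i) 1 + (if s i < x i then (1:ℝ) else 0)) / 2) ∂μ) :
    ∀ x x' : Fin d → ℝ,
      (∀ i, ∃ k : ℕ, k ≤ q ∧ x i = (k : ℝ) / q) →
      (∀ i, ∃ k : ℕ, k ≤ q ∧ x' i = (k : ℝ) / q) →
      |p x - p x'| ≤ (∑ i, |x i - x' i|) / (2 * lam) := by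
  intro x x' hx hx'
  have hq₀ : (0 : ℝ) < q := by exact_mod_cast hq
  have hqm : q ≤ m := by exact_mod_cast (show (q : ℝ) ≤ m by rw [hm]; nlinarith)
  have hint : ∀ y, Integrable (fun s => f (ssnRound y s)) μ := fun y =>
    integrable_of_map_eq_discUnif hmarg fun s => (abs_of_nonneg (hf _).1).trans_le (hf _).2
  have hcoord : ∀ i, μ.real ((fun s => s i) ⁻¹' uIco (x i) (x' i)) =
      |x i - x' i| / (2 * lam) := by
    intro i
    obtain ⟨a, ha, hxa⟩ := hx i
    obtain ⟨b, hb, hxb⟩ := hx' i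
    rw [← map_measureReal_apply (measurable_pi_apply i) (measurableSet_uIco _ _), hmarg i, hxa, hxb,
      discUnif_real_uIco hq (ha.trans hqm) (hb.trans hqm), hm, ← sub_div, abs_div,
      abs_of_pos hq₀]
    field_simp
  rw [hp, hp, Finset.sum_div]
  exact (abs_integral_comp_ssnRound_sub_le hf (hint x) (hint x')).trans_eq
    (Finset.sum_congr rfl fun i _ => hcoord i)
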